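/- Assume μ, σ : ℝ → ℝ satisfy conditions (A1)–(A4) with parameters p₀, p₁ ∈ [2,∞), ℓ_μ ∈ (0,∞), ℓ_σ ∈ [0, ℓ_μ/2], and let μ̃, σ̃ : ℝ → ℝ be the transformed coefficients defined via the function G. Then μ̃ and σ̃ satisfy the coercivity condition (A1): there exists c ∈ (0,∞) such that for all x ∈ ℝ, 2x·μ̃(x) + (p₀−1)·σ̃(x)² ≤ c·(1+x²). -/

import Mathlib

/-!
Away from the `ν`-neighbourhoods of the points `ξᵢ` the map `G` is the identity, so there
`G' = 1`, `G'' = 0` and the transformed coefficients are `μ` and `σ` themselves, for which (A1)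
holds. The union `K` of the closed neighbourhoods is compact; on it `G` and `G'` are continuous,
`G''` is bounded (it only jumps at the `ξᵢ`), `σ` is bounded by (A3) and `μ` piece by piece by
(A2)(ii). Hence the coercivity expression is bounded above on `K`, and that bound is absorbed
into the constant.
-/

/-- For `ξ₁ < … < ξ_k` and `i ∈ {0,…,k}`, `piece k ξ i` is the open interval
`(ξ_i, ξ_{i+1})` of the partition of `ℝ`, with the conventions `ξ₀ = -∞`, `ξ_{k+1} = ∞`. -/
def piece (k : ℕ) (ξ : Fin k → ℝ) (i : Fin (k + 1)) : Set ℝ :=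
  {x : ℝ | (∀ j : Fin k, (j : ℕ) < (i : ℕ) → ξ j < x) ∧
    ∀ j : Fin k, (i : ℕ) ≤ (j : ℕ) → x < ξ j}

/-- The bump function `φ(x) = (1 - x²)⁴ · 1_{[-1,1]}(x)`. -/
noncomputable def phi (x : ℝ) : ℝ := if x ∈ Set.Icc (-1 : ℝ) 1 then (1 - x ^ 2) ^ 4 else 0

/-- The transformation `G(x) = x + Σ_{i=1}^k α_i (x - ξ_i)|x - ξ_i| φ((x - ξ_i)/ν)`. -/
noncomputable def Gfun (k : ℕ) (ξ α : Fin k → ℝ) (ν : ℝ) (x : ℝ) : ℝ :=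
  x + ∑ i : Fin k, α i * (x - ξ i) * |x - ξ i| * phi ((x - ξ i) / ν)

open Set Bornology

theorem hasDerivAt_ite_le {f g f' g' : ℝ → ℝ} {a : ℝ}
    (hf : ∀ x, HasDerivAt f (f' x) x) (hg : ∀ x, HasDerivAt g (g' x) x)
    (h : f a = g a) (h' : f' a = g' a) (x : ℝ) :
    HasDerivAt (fun y => if y ≤ a then f y else g y) (if x ≤ a then f' x else g' x) x := by
  rcases lt_trichotomy x a with hx | rfl | hx
  · rw [if_pos hx.le]
    exact (hf x).congr_of_eventuallyEq
      ((eventually_lt_nhds hx).mono fun y hy => if_pos hy.le)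
  · rw [if_pos le_rfl, ← hasDerivWithinAt_univ, ← Iic_union_Ici (a := x)]
    refine ((hf x).hasDerivWithinAt.congr (fun y (hy : y ≤ x) => if_pos hy)
      (if_pos le_rfl)).union ?_
    rw [h']
    refine (hg x).hasDerivWithinAt.congr (fun y (hy : x ≤ y) => ?_) (by simp [h])
    split_ifs with hyx
    · rw [le_antisymm hyx hy, h]
    · rfl
  · rw [if_neg hx.not_ge]
    exact (hg x).congr_of_eventuallyEq
      ((eventually_gt_nhds hx).mono fun y hy => if_neg hy.not_ge)

theorem hasDerivAt_max_zero_pow {n : ℕ} (hn : 2 ≤ n) (x : ℝ) :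
    HasDerivAt (fun y => max y 0 ^ n) (n * max x 0 ^ (n - 1)) x := by
  have hpiece : (fun y : ℝ => max y 0 ^ n) = fun y => if y ≤ 0 then 0 else y ^ n := by
    funext y
    split_ifs with hy
    · simp [max_eq_right hy, zero_pow (by omega : n ≠ 0)]
    · rw [max_eq_left (not_le.1 hy).le]
  have hderiv : (n : ℝ) * max x 0 ^ (n - 1) = if x ≤ 0 then 0 else n * x ^ (n - 1) := by
    split_ifs with hx
    · simp [max_eq_right hx, zero_pow (by omega : n - 1 ≠ 0)]
    · rw [max_eq_left (not_le.1 hx).le]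
  rw [hpiece, hderiv]
  exact hasDerivAt_ite_le (fun y => hasDerivAt_const y 0) (fun y => hasDerivAt_pow n y)
    (by simp [zero_pow (by omega : n ≠ 0)]) (by simp [zero_pow (by omega : n - 1 ≠ 0)]) x

theorem hasDerivAt_mul_abs (x : ℝ) : HasDerivAt (fun y => y * |y|) (2 * |x|) x := by
  have hpiece : (fun y : ℝ => y * |y|) = fun y => if y ≤ 0 then -y ^ 2 else y ^ 2 := by
    funext y
    split_ifs with hy
    · rw [abs_of_nonpos hy]; ring
    · rw [abs_of_pos (not_le.1 hy)]; ring
  have hderiv : 2 * |x| = if x ≤ 0 then -(2 * x) else 2 * x := by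
    split_ifs with hx
    · rw [abs_of_nonpos hx]; ring
    · rw [abs_of_pos (not_le.1 hx)]
  rw [hpiece, hderiv]
  exact hasDerivAt_ite_le (a := 0) (fun y => by simpa using (hasDerivAt_pow 2 y).neg)
    (fun y => by simpa using hasDerivAt_pow 2 y) (by simp) (by simp) x

theorem max_one_sub_sq_eq_zero {x : ℝ} (hx : 1 ≤ |x|) : max (1 - x ^ 2) 0 = 0 :=
  max_eq_right (by nlinarith [sq_abs x])

theorem phi_eq (x : ℝ) : phi x = max (1 - x ^ 2) 0 ^ 4 := by
  unfold phi
  split_ifs with hx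
  · rw [max_eq_left (by nlinarith [hx.1, hx.2])]
  · rw [mem_Icc, ← abs_le, not_le] at hx
    rw [max_one_sub_sq_eq_zero hx.le, zero_pow four_ne_zero]

noncomputable def phiDeriv (x : ℝ) : ℝ := -8 * x * max (1 - x ^ 2) 0 ^ 3

noncomputable def phiDeriv2 (x : ℝ) : ℝ :=
  -8 * max (1 - x ^ 2) 0 ^ 3 + 48 * x ^ 2 * max (1 - x ^ 2) 0 ^ 2

theorem hasDerivAt_one_sub_sq (x : ℝ) : HasDerivAt (fun y : ℝ => 1 - y ^ 2) (-(2 * x)) x := by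
  simpa using (hasDerivAt_pow 2 x).const_sub 1

theorem hasDerivAt_phi (x : ℝ) : HasDerivAt phi (phiDeriv x) x := by
  rw [show phi = fun y => max (1 - y ^ 2) 0 ^ 4 from funext phi_eq]
  exact ((hasDerivAt_max_zero_pow (n := 4) (by norm_num) _).comp x
    (hasDerivAt_one_sub_sq x)).congr_deriv (by simp only [phiDeriv]; norm_num; ring)

theorem hasDerivAt_phiDeriv (x : ℝ) : HasDerivAt phiDeriv (phiDeriv2 x) x :=
  (((hasDerivAt_id x).const_mul (-8)).mul ((hasDerivAt_max_zero_pow (n := 3) (by norm_num) _).comp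
    x (hasDerivAt_one_sub_sq x))).congr_deriv (by simp only [phiDeriv2, id]; norm_num; ring)

theorem continuous_phi : Continuous phi :=
  continuous_iff_continuousAt.2 fun x => (hasDerivAt_phi x).continuousAt

theorem continuous_phiDeriv : Continuous phiDeriv :=
  continuous_iff_continuousAt.2 fun x => (hasDerivAt_phiDeriv x).continuousAt

theorem continuous_phiDeriv2 : Continuous phiDeriv2 := by
  unfold phiDeriv2; fun_prop

theorem phi_eq_zero {x : ℝ} (hx : 1 ≤ |x|) : phi x = 0 := by
  simp [phi_eq, max_one_sub_sq_eq_zero hx]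

theorem phiDeriv_eq_zero {x : ℝ} (hx : 1 ≤ |x|) : phiDeriv x = 0 := by
  simp [phiDeriv, max_one_sub_sq_eq_zero hx]

theorem phiDeriv2_eq_zero {x : ℝ} (hx : 1 ≤ |x|) : phiDeriv2 x = 0 := by
  simp [phiDeriv2, max_one_sub_sq_eq_zero hx]

noncomputable def sqBump (ν t : ℝ) : ℝ := t * |t| * phi (t / ν)

noncomputable def sqBumpDeriv (ν t : ℝ) : ℝ :=
  2 * |t| * phi (t / ν) + t * |t| * phiDeriv (t / ν) / ν

noncomputable def sqBumpDeriv2 (ν t : ℝ) : ℝ :=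
  2 * SignType.sign t * phi (t / ν)
    + (4 * |t| * phiDeriv (t / ν) / ν + t * |t| * phiDeriv2 (t / ν) / ν ^ 2)

theorem hasDerivAt_div_const_comp {f f' : ℝ → ℝ} (hf : ∀ x, HasDerivAt f (f' x) x) (ν t : ℝ) :
    HasDerivAt (fun s => f (s / ν)) (f' (t / ν) / ν) t :=
  ((hf (t / ν)).comp t ((hasDerivAt_id t).div_const ν)).congr_deriv (by ring)

theorem hasDerivAt_sqBump (ν t : ℝ) : HasDerivAt (sqBump ν) (sqBumpDeriv ν t) t :=
  ((hasDerivAt_mul_abs t).mul (hasDerivAt_div_const_comp hasDerivAt_phi ν t)).congr_deriv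
    (by simp only [sqBumpDeriv]; ring)

theorem hasDerivAt_sqBumpDeriv (ν : ℝ) {t : ℝ} (ht : t ≠ 0) :
    HasDerivAt (sqBumpDeriv ν) (sqBumpDeriv2 ν t) t := by
  have h1 := ((hasDerivAt_abs ht).const_mul 2).mul (hasDerivAt_div_const_comp hasDerivAt_phi ν t)
  have h2 := ((hasDerivAt_mul_abs t).mul
    (hasDerivAt_div_const_comp hasDerivAt_phiDeriv ν t)).div_const ν
  exact (h1.add h2).congr_deriv (by simp only [sqBumpDeriv2]; ring)

theorem continuous_sqBumpDeriv (ν : ℝ) : Continuous (sqBumpDeriv ν) := by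
  have := continuous_phi
  have := continuous_phiDeriv
  unfold sqBumpDeriv; fun_prop

theorem one_le_abs_div {ν t : ℝ} (hν : 0 < ν) (ht : ν ≤ |t|) : 1 ≤ |t / ν| := by
  rwa [abs_div, abs_of_pos hν, one_le_div hν]

theorem sqBump_eq_zero {ν t : ℝ} (hν : 0 < ν) (ht : ν ≤ |t|) : sqBump ν t = 0 := by
  simp [sqBump, phi_eq_zero (one_le_abs_div hν ht)]

theorem sqBumpDeriv_eq_zero {ν t : ℝ} (hν : 0 < ν) (ht : ν ≤ |t|) : sqBumpDeriv ν t = 0 := by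
  have h := one_le_abs_div hν ht
  simp [sqBumpDeriv, phi_eq_zero h, phiDeriv_eq_zero h]

theorem sqBumpDeriv2_eq_zero {ν t : ℝ} (hν : 0 < ν) (ht : ν ≤ |t|) : sqBumpDeriv2 ν t = 0 := by
  have h := one_le_abs_div hν ht
  simp [sqBumpDeriv2, phi_eq_zero h, phiDeriv_eq_zero h, phiDeriv2_eq_zero h]

theorem abs_sign_le_one (t : ℝ) : |(SignType.sign t : ℝ)| ≤ 1 := by
  cases SignType.sign t <;> simp

theorem exists_abs_sqBumpDeriv2_le {ν : ℝ} (hν : 0 < ν) :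
    ∃ C, ∀ t, |sqBumpDeriv2 ν t| ≤ C := by
  set majorant : ℝ → ℝ := fun t => 2 * |phi (t / ν)|
    + |4 * |t| * phiDeriv (t / ν) / ν + t * |t| * phiDeriv2 (t / ν) / ν ^ 2|
  have hcont : Continuous majorant := by
    have := continuous_phi
    have := continuous_phiDeriv
    have := continuous_phiDeriv2
    fun_prop
  have hsupp : HasCompactSupport majorant := by
    refine HasCompactSupport.intro (isCompact_closedBall 0 ν) fun t ht => ?_
    rw [Metric.mem_closedBall, Real.dist_eq, sub_zero, not_le] at ht
    have h := one_le_abs_div hν ht.le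
    simp [majorant, phi_eq_zero h, phiDeriv_eq_zero h, phiDeriv2_eq_zero h]
  obtain ⟨C, hC⟩ := hcont.bounded_above_of_compact_support hsupp
  refine ⟨C, fun t => le_trans ?_ ((le_abs_self _).trans (hC t))⟩
  refine (abs_add_le _ _).trans (add_le_add ?_ le_rfl)
  rw [abs_mul, abs_mul, abs_two]
  gcongr
  exact mul_le_of_le_one_right zero_le_two (abs_sign_le_one t)

noncomputable def translateSum {k : ℕ} (ξ α : Fin k → ℝ) (f : ℝ → ℝ) (x : ℝ) : ℝ :=
  ∑ i, α i * f (x - ξ i)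

section translateSum

variable {k : ℕ} {ξ α : Fin k → ℝ} {f : ℝ → ℝ}

theorem hasDerivAt_translateSum {f' : ℝ → ℝ} {x : ℝ}
    (hf : ∀ i, HasDerivAt f (f' (x - ξ i)) (x - ξ i)) :
    HasDerivAt (translateSum ξ α f) (translateSum ξ α f' x) x := by
  unfold translateSum
  exact HasDerivAt.fun_sum fun i _ =>
    (((hf i).comp x ((hasDerivAt_id x).sub_const (ξ i))).const_mul (α i)).congr_deriv (by simp)

theorem continuous_translateSum (hf : Continuous f) : Continuous (translateSum ξ α f) := by
  unfold translateSum; fun_prop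

theorem abs_translateSum_le {C : ℝ} (hf : ∀ t, |f t| ≤ C) (x : ℝ) :
    |translateSum ξ α f x| ≤ (∑ i, |α i|) * C := by
  rw [translateSum, Finset.sum_mul]
  refine (Finset.abs_sum_le_sum_abs _ _).trans (Finset.sum_le_sum fun i _ => ?_)
  rw [abs_mul]
  exact mul_le_mul_of_nonneg_left (hf _) (abs_nonneg _)

theorem translateSum_eq_zero {ν x : ℝ} (hf : ∀ t, ν ≤ |t| → f t = 0)
    (hx : ∀ i, ν ≤ |x - ξ i|) : translateSum ξ α f x = 0 :=
  Finset.sum_eq_zero fun i _ => by rw [hf _ (hx i), mul_zero]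

end translateSum

theorem Gfun_eq (k : ℕ) (ξ α : Fin k → ℝ) (ν : ℝ) :
    Gfun k ξ α ν = fun x => x + translateSum ξ α (sqBump ν) x := by
  funext x
  simp only [Gfun, translateSum, sqBump, mul_assoc]

theorem hasDerivAt_Gfun (k : ℕ) (ξ α : Fin k → ℝ) (ν x : ℝ) :
    HasDerivAt (Gfun k ξ α ν) (1 + translateSum ξ α (sqBumpDeriv ν) x) x := by
  rw [Gfun_eq]
  exact (hasDerivAt_id x).add (hasDerivAt_translateSum fun i => hasDerivAt_sqBump ν _)

theorem hasDerivAt_one_add_translateSum_sqBumpDeriv {k : ℕ} {ξ : Fin k → ℝ} (α : Fin k → ℝ)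
    (ν : ℝ) {x : ℝ} (hx : ∀ i, x ≠ ξ i) :
    HasDerivAt (fun y => 1 + translateSum ξ α (sqBumpDeriv ν) y)
      (translateSum ξ α (sqBumpDeriv2 ν) x) x :=
  ((hasDerivAt_const x 1).add (hasDerivAt_translateSum fun i =>
    hasDerivAt_sqBumpDeriv ν (sub_ne_zero.2 (hx i)))).congr_deriv (zero_add _)

theorem exists_mem_piece {k : ℕ} {ξ : Fin k → ℝ} (hξ : StrictMono ξ) {x : ℝ}
    (hx : x ∉ range ξ) : ∃ i, x ∈ piece k ξ i := by
  -- the index of the piece containing `x` is the number of points `ξ j` below `x`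
  set below := Finset.univ.filter fun j => ξ j < x
  have hk : below.card ≤ k := (Finset.card_filter_le _ _).trans (by simp)
  have key : ∀ j : Fin k, ξ j < x ↔ (j : ℕ) < below.card := by
    intro j
    constructor
    · intro hj
      have hsub : Finset.Iic j ⊆ below := fun j' hj' =>
        Finset.mem_filter.2
          ⟨Finset.mem_univ _, (hξ.monotone (Finset.mem_Iic.1 hj')).trans_lt hj⟩
      have := Finset.card_le_card hsub
      rw [Fin.card_Iic] at this
      omega
    · intro hj
      by_contra hj'
      have hsub : below ⊆ Finset.Iio j := fun j' hj'' =>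
        Finset.mem_Iio.2 (hξ.lt_iff_lt.1 ((Finset.mem_filter.1 hj'').2.trans_le (not_lt.1 hj')))
      have := Finset.card_le_card hsub
      rw [Fin.card_Iio] at this
      omega
  refine ⟨⟨below.card, by omega⟩, fun j hj => (key j).2 hj, fun j hj => ?_⟩
  refine lt_of_le_of_ne (not_lt.1 fun h => ?_) fun h => hx ⟨j, h.symm⟩
  have := (key j).1 h
  simp only at hj
  omega

theorem isBounded_image_inter_of_abs_sub_le {f : ℝ → ℝ} {s t : Set ℝ} {c ℓ : ℝ} (hc : 0 ≤ c)
    (hℓ : 0 ≤ ℓ) (hf : ∀ x ∈ s, ∀ y ∈ s, |f x - f y| ≤ c * (1 + |x| ^ ℓ + |y| ^ ℓ) * |x - y|)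
    (ht : IsBounded t) : IsBounded (f '' (s ∩ t)) := by
  rcases (s ∩ t).eq_empty_or_nonempty with hst | ⟨r, hr, -⟩
  · simp [hst]
  obtain ⟨R, hR⟩ := ht.exists_norm_le
  refine isBounded_iff_forall_norm_le.2 ⟨|f r| + c * (1 + R ^ ℓ + |r| ^ ℓ) * (R + |r|), ?_⟩
  rintro _ ⟨x, ⟨hxs, hxt⟩, rfl⟩
  have hxR : |x| ≤ R := hR x hxt
  have hR0 : 0 ≤ R := (abs_nonneg x).trans hxR
  have hfxr : |f x - f r| ≤ c * (1 + R ^ ℓ + |r| ^ ℓ) * (R + |r|) := by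
    refine (hf x hxs r hr).trans ?_
    have := Real.rpow_nonneg hR0 ℓ
    gcongr
    exact (abs_sub _ _).trans (by gcongr)
  rw [Real.norm_eq_abs]
  linarith [abs_sub_abs_le_abs_sub (f x) (f r)]

theorem isBounded_image_of_piecewise {k : ℕ} {ξ : Fin k → ℝ} (hξ : StrictMono ξ) {f : ℝ → ℝ}
    {c ℓ : ℝ} (hc : 0 ≤ c) (hℓ : 0 ≤ ℓ)
    (hf : ∀ i, ∀ x ∈ piece k ξ i, ∀ y ∈ piece k ξ i,
      |f x - f y| ≤ c * (1 + |x| ^ ℓ + |y| ^ ℓ) * |x - y|)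
    {t : Set ℝ} (ht : IsBounded t) : IsBounded (f '' t) := by
  have hcover : t ⊆ (⋃ i, piece k ξ i ∩ t) ∪ range ξ := by
    intro x hx
    by_cases hxξ : x ∈ range ξ
    · exact Or.inr hxξ
    · obtain ⟨i, hi⟩ := exists_mem_piece hξ hxξ
      exact Or.inl (mem_iUnion.2 ⟨i, hi, hx⟩)
  refine IsBounded.subset ?_ (image_mono hcover)
  rw [image_union, image_iUnion, isBounded_union, isBounded_iUnion]
  exact ⟨fun i => isBounded_image_inter_of_abs_sub_le hc hℓ (hf i) ht,
    ((finite_range ξ).image f).isBounded⟩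

theorem transformed_coercivity_le {p g g' g'' m s A A' A'' M S : ℝ} (hp : 1 ≤ p)
    (hg : |g| ≤ A) (hg' : |g'| ≤ A') (hg'' : |g''| ≤ A'') (hm : |m| ≤ M) (hs : |s| ≤ S) :
    2 * g * (g' * m + 1 / 2 * g'' * s ^ 2) + (p - 1) * (g' * s) ^ 2
      ≤ 2 * A * (A' * M + 1 / 2 * A'' * S ^ 2) + (p - 1) * (A' * S) ^ 2 := by
  have hp1 : 0 ≤ p - 1 := by linarith
  have hA := (abs_nonneg g).trans hg
  have hA' := (abs_nonneg g').trans hg'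
  have hA'' := (abs_nonneg g'').trans hg''
  have hM := (abs_nonneg m).trans hm
  have hS := (abs_nonneg s).trans hs
  have hlin : |2 * g * (g' * m + 1 / 2 * g'' * s ^ 2)|
      ≤ 2 * |g| * (|g'| * |m| + 1 / 2 * |g''| * |s| ^ 2) := by
    rw [abs_mul, abs_mul, abs_two]
    gcongr
    refine (abs_add_le _ _).trans_eq ?_
    rw [abs_mul, abs_mul, abs_mul, abs_pow, abs_of_pos (by norm_num : (0 : ℝ) < 1 / 2)]
  calc 2 * g * (g' * m + 1 / 2 * g'' * s ^ 2) + (p - 1) * (g' * s) ^ 2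
      ≤ 2 * |g| * (|g'| * |m| + 1 / 2 * |g''| * |s| ^ 2) + (p - 1) * (|g'| * |s|) ^ 2 := by
        rw [← abs_mul g' s, sq_abs (g' * s)]
        exact add_le_add ((le_abs_self _).trans hlin) le_rfl
    _ ≤ 2 * A * (A' * M + 1 / 2 * A'' * S ^ 2) + (p - 1) * (A' * S) ^ 2 := by gcongr

section transform

variable {k : ℕ} {ξ α : Fin k → ℝ} {ν : ℝ} {G' G'' : ℝ → ℝ}

theorem eq_one_add_translateSum_of_hasDerivAt_Gfun
    (hG' : ∀ x, HasDerivAt (Gfun k ξ α ν) (G' x) x) :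
    G' = fun y => 1 + translateSum ξ α (sqBumpDeriv ν) y :=
  funext fun y => (hG' y).unique (hasDerivAt_Gfun k ξ α ν y)

theorem eq_translateSum_of_hasDerivAt_deriv_Gfun
    (hG' : ∀ x, HasDerivAt (Gfun k ξ α ν) (G' x) x)
    (hG'' : ∀ x, (∀ i, x ≠ ξ i) → HasDerivAt G' (G'' x) x) {y : ℝ} (hy : ∀ i, y ≠ ξ i) :
    G'' y = translateSum ξ α (sqBumpDeriv2 ν) y :=
  (hG'' y hy).unique (eq_one_add_translateSum_of_hasDerivAt_Gfun hG' ▸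
    hasDerivAt_one_add_translateSum_sqBumpDeriv α ν hy)

theorem Gfun_eq_id_of_notMem (hν : 0 < ν) (hG' : ∀ x, HasDerivAt (Gfun k ξ α ν) (G' x) x)
    (hG'' : ∀ x, (∀ i, x ≠ ξ i) → HasDerivAt G' (G'' x) x) {y : ℝ}
    (hy : y ∉ ⋃ i, Metric.closedBall (ξ i) ν) :
    Gfun k ξ α ν y = y ∧ G' y = 1 ∧ G'' y = 0 := by
  simp only [mem_iUnion, Metric.mem_closedBall, Real.dist_eq, not_exists, not_le] at hy
  have hfar : ∀ i, ν ≤ |y - ξ i| := fun i => (hy i).le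
  have hne : ∀ i, y ≠ ξ i := fun i h => by simpa [h, hν.not_gt] using hy i
  refine ⟨?_, ?_, ?_⟩
  · simp only [Gfun_eq, translateSum_eq_zero (fun t => sqBump_eq_zero hν) hfar, add_zero]
  · simp only [eq_one_add_translateSum_of_hasDerivAt_Gfun hG',
      translateSum_eq_zero (fun t => sqBumpDeriv_eq_zero hν) hfar, add_zero]
  · rw [eq_translateSum_of_hasDerivAt_deriv_Gfun hG' hG'' hne,
      translateSum_eq_zero (fun t => sqBumpDeriv2_eq_zero hν) hfar]

theorem continuous_of_hasDerivAt_Gfun (hG' : ∀ x, HasDerivAt (Gfun k ξ α ν) (G' x) x) :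
    Continuous G' := by
  rw [eq_one_add_translateSum_of_hasDerivAt_Gfun hG']
  exact continuous_const.add (continuous_translateSum (continuous_sqBumpDeriv ν))

theorem isBounded_image_of_hasDerivAt_deriv_Gfun (hν : 0 < ν)
    (hG' : ∀ x, HasDerivAt (Gfun k ξ α ν) (G' x) x)
    (hG'' : ∀ x, (∀ i, x ≠ ξ i) → HasDerivAt G' (G'' x) x) (t : Set ℝ) :
    IsBounded (G'' '' t) := by
  obtain ⟨C, hC⟩ := exists_abs_sqBumpDeriv2_le hν
  refine ((Metric.isBounded_closedBall (x := 0) (r := (∑ i, |α i|) * C)).union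
    ((finite_range ξ).image G'').isBounded).subset ?_
  rintro _ ⟨y, -, rfl⟩
  by_cases hy : ∀ i, y ≠ ξ i
  · left
    rw [mem_closedBall_zero_iff, Real.norm_eq_abs,
      eq_translateSum_of_hasDerivAt_deriv_Gfun hG' hG'' hy]
    exact abs_translateSum_le hC y
  · push Not at hy
    obtain ⟨i, rfl⟩ := hy
    exact Or.inr (mem_image_of_mem G'' (mem_range_self i))

end transform

theorem exists_coercivity_const_of_eq_id_off {p c₁ : ℝ} {K : Set ℝ} {G G' G'' μ σ : ℝ → ℝ}
    (hp : 1 ≤ p) (hc₁ : 0 < c₁)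
    (hA1 : ∀ y, 2 * y * μ y + (p - 1) * σ y ^ 2 ≤ c₁ * (1 + y ^ 2))
    (hoff : ∀ y ∉ K, G y = y ∧ G' y = 1 ∧ G'' y = 0)
    (hG : IsBounded (G '' K)) (hG' : IsBounded (G' '' K)) (hG'' : IsBounded (G'' '' K))
    (hμ : IsBounded (μ '' K)) (hσ : IsBounded (σ '' K)) :
    ∃ c, 0 < c ∧ ∀ y, 2 * G y * (G' y * μ y + 1 / 2 * G'' y * σ y ^ 2)
      + (p - 1) * (G' y * σ y) ^ 2 ≤ c * (1 + G y ^ 2) := by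
  have bound : ∀ {f : ℝ → ℝ}, IsBounded (f '' K) → ∃ C, ∀ y ∈ K, |f y| ≤ C := fun hf => by
    obtain ⟨C, hC⟩ := hf.exists_norm_le
    exact ⟨C, fun y hy => hC _ (mem_image_of_mem _ hy)⟩
  obtain ⟨A, hA⟩ := bound hG
  obtain ⟨A', hA'⟩ := bound hG'
  obtain ⟨A'', hA''⟩ := bound hG''
  obtain ⟨M, hM⟩ := bound hμ
  obtain ⟨S, hS⟩ := bound hσ
  set C := 2 * A * (A' * M + 1 / 2 * A'' * S ^ 2) + (p - 1) * (A' * S) ^ 2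
  refine ⟨c₁ + |C|, by positivity, fun y => ?_⟩
  by_cases hy : y ∈ K
  · calc _ ≤ C :=
          transformed_coercivity_le hp (hA y hy) (hA' y hy) (hA'' y hy) (hM y hy) (hS y hy)
      _ ≤ |C| * (1 + G y ^ 2) := (le_abs_self C).trans
          (le_mul_of_one_le_right (abs_nonneg C) (le_add_of_nonneg_right (sq_nonneg _)))
      _ ≤ _ := by gcongr; linarith
  · obtain ⟨hGy, hG'y, hG''y⟩ := hoff y hy
    rw [hGy, hG'y, hG''y]
    calc _ = 2 * y * μ y + (p - 1) * σ y ^ 2 := by ring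
      _ ≤ c₁ * (1 + y ^ 2) := hA1 y
      _ ≤ _ := by gcongr; exact le_add_of_nonneg_right (abs_nonneg C)

theorem stmt_8_general (p₀ ℓμ ℓσ : ℝ) (hp₀ : 2 ≤ p₀)
    (hℓμ : 0 < ℓμ) (hℓσ0 : 0 ≤ ℓσ)
    (μ σ : ℝ → ℝ)
    -- (A1)
    (c₁ : ℝ) (hc₁ : 0 < c₁)
    (hA1 : ∀ x : ℝ, 2 * x * μ x + (p₀ - 1) * (σ x) ^ 2 ≤ c₁ * (1 + x ^ 2))
    -- (A2): discontinuity points ξ₁ < … < ξ_k, k ≥ 1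
    (c₂ : ℝ) (hc₂ : 0 < c₂) (k : ℕ) (ξ : Fin k → ℝ) (hξ : StrictMono ξ)
    (hA2ii : ∀ i : Fin (k + 1), ∀ x ∈ piece k ξ i, ∀ y ∈ piece k ξ i,
      |μ x - μ y| ≤ c₂ * (1 + |x| ^ ℓμ + |y| ^ ℓμ) * |x - y|)
    -- (A3)
    (c₃ : ℝ) (hc₃ : 0 < c₃)
    (hA3 : ∀ x y : ℝ, |σ x - σ y| ≤ c₃ * (1 + |x| ^ ℓσ + |y| ^ ℓσ) * |x - y|)
    (α : Fin k → ℝ)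
    (ν : ℝ) (hν0 : 0 < ν)
    -- G is differentiable with derivative G'; G' is differentiable off the points ξ_i
    -- with derivative G'', extended to the points ξ_i by the prescribed formula
    (G' G'' Ginv : ℝ → ℝ)
    (hG' : ∀ x : ℝ, HasDerivAt (Gfun k ξ α ν) (G' x) x)
    (hG''a : ∀ x : ℝ, (∀ i : Fin k, x ≠ ξ i) → HasDerivAt G' (G'' x) x)
    -- Ginv is the inverse of the bijection G
    (hGinv2 : ∀ x : ℝ, Gfun k ξ α ν (Ginv x) = x) :
    -- μ̃ = (G'·μ + ½·G''·σ²) ∘ G⁻¹  and  σ̃ = (G'·σ) ∘ G⁻¹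
    ∃ c : ℝ, 0 < c ∧ ∀ x : ℝ,
      2 * x * (G' (Ginv x) * μ (Ginv x) + (1 / 2) * G'' (Ginv x) * (σ (Ginv x)) ^ 2)
        + (p₀ - 1) * (G' (Ginv x) * σ (Ginv x)) ^ 2 ≤ c * (1 + x ^ 2) := by
  set K := ⋃ i, Metric.closedBall (ξ i) ν
  have hK : IsCompact K := isCompact_iUnion fun i => isCompact_closedBall _ _
  have hσ : IsBounded (σ '' K) := by
    simpa using isBounded_image_inter_of_abs_sub_le (s := univ) hc₃.le hℓσ0
      (fun x _ y _ => hA3 x y) hK.isBounded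
  obtain ⟨c, hc, hcoerc⟩ := exists_coercivity_const_of_eq_id_off (by linarith) hc₁ hA1
    (fun y hy => Gfun_eq_id_of_notMem hν0 hG' hG''a hy)
    (hK.image (continuous_iff_continuousAt.2 fun y => (hG' y).continuousAt)).isBounded
    (hK.image (continuous_of_hasDerivAt_Gfun hG')).isBounded
    (isBounded_image_of_hasDerivAt_deriv_Gfun hν0 hG' hG''a K)
    (isBounded_image_of_piecewise hξ hc₂.le hℓμ.le hA2ii hK.isBounded) hσ
  exact ⟨c, hc, fun x => by simpa only [hGinv2] using hcoerc (Ginv x)⟩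

/-- Under (A1)-(A4), the transformed coefficients `μ̃` and `σ̃` satisfy
the coercivity condition (A1). -/
theorem stmt_8 (p₀ p₁ ℓμ ℓσ : ℝ) (hp₀ : 2 ≤ p₀) (hp₁ : 2 ≤ p₁)
    (hℓμ : 0 < ℓμ) (hℓσ0 : 0 ≤ ℓσ) (hℓσ : ℓσ ≤ ℓμ / 2)
    (μ σ : ℝ → ℝ)
    -- (A1)
    (c₁ : ℝ) (hc₁ : 0 < c₁)
    (hA1 : ∀ x : ℝ, 2 * x * μ x + (p₀ - 1) * (σ x) ^ 2 ≤ c₁ * (1 + x ^ 2))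
    -- (A2): discontinuity points ξ₁ < … < ξ_k, k ≥ 1
    (c₂ : ℝ) (hc₂ : 0 < c₂) (k : ℕ) (hk : 1 ≤ k) (ξ : Fin k → ℝ) (hξ : StrictMono ξ)
    (hA2i : ∀ i : Fin (k + 1), ∀ x ∈ piece k ξ i, ∀ y ∈ piece k ξ i,
      2 * (x - y) * (μ x - μ y) + (p₁ - 1) * (σ x - σ y) ^ 2 ≤ c₂ * |x - y| ^ 2)
    (hA2ii : ∀ i : Fin (k + 1), ∀ x ∈ piece k ξ i, ∀ y ∈ piece k ξ i,
      |μ x - μ y| ≤ c₂ * (1 + |x| ^ ℓμ + |y| ^ ℓμ) * |x - y|)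
    -- (A3)
    (c₃ : ℝ) (hc₃ : 0 < c₃)
    (hA3 : ∀ x y : ℝ, |σ x - σ y| ≤ c₃ * (1 + |x| ^ ℓσ + |y| ^ ℓσ) * |x - y|)
    -- (A4)
    (hA4 : ∀ i : Fin k, σ (ξ i) ≠ 0)
    -- one-sided limits μ(ξ_i-) and μ(ξ_i+)
    (μm μp : Fin k → ℝ)
    (hμm : ∀ i : Fin k, Filter.Tendsto μ (nhdsWithin (ξ i) (Set.Iio (ξ i))) (nhds (μm i)))
    (hμp : ∀ i : Fin k, Filter.Tendsto μ (nhdsWithin (ξ i) (Set.Ioi (ξ i))) (nhds (μp i)))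
    -- α_i = (μ(ξ_i-) - μ(ξ_i+)) / (2 σ(ξ_i)²)
    (α : Fin k → ℝ) (hα : ∀ i : Fin k, α i = (μm i - μp i) / (2 * (σ (ξ i)) ^ 2))
    -- ν ∈ (0, ρ_{ξ,α}):  ν·8|α_i| < 1 encodes ν < 1/(8|α_i|) with the convention 1/0 = ∞
    (ν : ℝ) (hν0 : 0 < ν)
    (hν1 : ∀ i : Fin k, ν * (8 * |α i|) < 1)
    (hν2 : ∀ i j : Fin k, (i : ℕ) + 1 = (j : ℕ) → ν < (ξ j - ξ i) / 2)
    -- G is differentiable with derivative G'; G' is differentiable off the points ξ_i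
    -- with derivative G'', extended to the points ξ_i by the prescribed formula
    (G' G'' Ginv : ℝ → ℝ)
    (hG' : ∀ x : ℝ, HasDerivAt (Gfun k ξ α ν) (G' x) x)
    (hG''a : ∀ x : ℝ, (∀ i : Fin k, x ≠ ξ i) → HasDerivAt G' (G'' x) x)
    (hG''b : ∀ i : Fin k, G'' (ξ i) = 2 * α i + 2 * (μp i - μ (ξ i)) / (σ (ξ i)) ^ 2)
    -- Ginv is the inverse of the bijection G
    (hGinv1 : ∀ x : ℝ, Ginv (Gfun k ξ α ν x) = x)
    (hGinv2 : ∀ x : ℝ, Gfun k ξ α ν (Ginv x) = x) :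
    -- μ̃ = (G'·μ + ½·G''·σ²) ∘ G⁻¹  and  σ̃ = (G'·σ) ∘ G⁻¹
    ∃ c : ℝ, 0 < c ∧ ∀ x : ℝ,
      2 * x * (G' (Ginv x) * μ (Ginv x) + (1 / 2) * G'' (Ginv x) * (σ (Ginv x)) ^ 2)
        + (p₀ - 1) * (G' (Ginv x) * σ (Ginv x)) ^ 2 ≤ c * (1 + x ^ 2) :=
  stmt_8_general p₀ ℓμ ℓσ hp₀ hℓμ hℓσ0 μ σ c₁ hc₁ hA1 c₂ hc₂ k ξ hξ hA2ii c₃ hc₃ hA3 α ν hν0 G' G''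
    Ginv hG' hG''a hGinv2
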